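/- For all real angles φ, θ, ψ and every l ∈ ℝ, the quaternion position formula evaluated at the Euler-angle quaternion q(φ,θ,ψ) = (q0,q1,q2,q3) reproduces the Euler-angle position formula: l·(q0² + q1² − q2² − q3², 2(q0q3 + q1q2), 2(q1q3 − q0q2)) = l·(cos θ, sin φ·sin θ, −cos φ·sin θ). In particular the position is independent of the bearing angle ψ. -/

import Mathlib

open Real

/-- The Euler-angle quaternion `q(φ,θ,ψ)` as a vector in ℝ⁴. -/
noncomputable def eulerQuat (φ θ ψ : ℝ) : EuclideanSpace ℝ (Fin 4) :=
  WithLp.toLp 2 ![cos (φ / 2) * cos (θ / 2) * cos (ψ / 2)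
      + sin (φ / 2) * cos (θ / 2) * sin (ψ / 2),
    sin (φ / 2) * cos (θ / 2) * cos (ψ / 2)
      - cos (φ / 2) * cos (θ / 2) * sin (ψ / 2),
    -(sin (φ / 2) * sin (θ / 2) * sin (ψ / 2))
      + cos (φ / 2) * sin (θ / 2) * cos (ψ / 2),
    sin (φ / 2) * sin (θ / 2) * cos (ψ / 2)
      + cos (φ / 2) * sin (θ / 2) * sin (ψ / 2)]

/-!
Writing the half angles of `φ, θ, ψ` as `a, b, c`, the Euler-angle quaternion is
`(cos b cos (a - c), cos b sin (a - c), sin b cos (a + c), sin b sin (a + c))`. For any quaternion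
of the shape `(cos b cos u, cos b sin u, sin b cos v, sin b sin v)` the position map gives
`(cos 2b, sin (u + v) sin 2b, -cos (u + v) sin 2b)` by the double-angle and addition formulas,
and here `u + v = φ`: the bearing `ψ` cancels.
-/

/-- Image of the first basis vector under the rotation represented by the unit quaternion
`(q0, q1, q2, q3)`. -/
noncomputable def quatPosition (q0 q1 q2 q3 : ℝ) : EuclideanSpace ℝ (Fin 3) :=
  WithLp.toLp 2 ![q0 ^ 2 + q1 ^ 2 - q2 ^ 2 - q3 ^ 2, 2 * (q0 * q3 + q1 * q2),
    2 * (q1 * q3 - q0 * q2)]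

theorem quatPosition_halfAngle (b u v : ℝ) :
    quatPosition (cos b * cos u) (cos b * sin u) (sin b * cos v) (sin b * sin v) =
      WithLp.toLp 2 ![cos (2 * b), sin (u + v) * sin (2 * b), -(cos (u + v) * sin (2 * b))] := by
  unfold quatPosition
  congr 1
  simp only [Matrix.vecCons_inj, and_true, cos_two_mul, sin_two_mul, sin_add, cos_add]
  refine ⟨?_, ?_, ?_⟩
  · linear_combination cos b ^ 2 * cos_sq_add_sin_sq u - sin b ^ 2 * cos_sq_add_sin_sq v
      - cos_sq_add_sin_sq b
  · ring
  · ring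

theorem eulerQuat_eq_halfAngle (φ θ ψ : ℝ) :
    eulerQuat φ θ ψ = WithLp.toLp 2
      ![cos (θ / 2) * cos (φ / 2 - ψ / 2), cos (θ / 2) * sin (φ / 2 - ψ / 2),
        sin (θ / 2) * cos (φ / 2 + ψ / 2), sin (θ / 2) * sin (φ / 2 + ψ / 2)] := by
  unfold eulerQuat
  congr 1
  simp only [Matrix.vecCons_inj, and_true, cos_sub, sin_sub, cos_add, sin_add]
  refine ⟨?_, ?_, ?_, ?_⟩ <;> ring

/-- The quaternion position formula evaluated at the Euler-angle quaternion reproduces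
the Euler-angle position formula; in particular it is independent of the bearing `ψ`. -/
theorem eulerQuat_position (φ θ ψ : ℝ) (l : ℝ) :
    l • (WithLp.toLp 2 ![eulerQuat φ θ ψ 0 ^ 2 + eulerQuat φ θ ψ 1 ^ 2
            - eulerQuat φ θ ψ 2 ^ 2 - eulerQuat φ θ ψ 3 ^ 2,
          2 * (eulerQuat φ θ ψ 0 * eulerQuat φ θ ψ 3
            + eulerQuat φ θ ψ 1 * eulerQuat φ θ ψ 2),
          2 * (eulerQuat φ θ ψ 1 * eulerQuat φ θ ψ 3
            - eulerQuat φ θ ψ 0 * eulerQuat φ θ ψ 2)] : EuclideanSpace ℝ (Fin 3)) =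
    l • (WithLp.toLp 2 ![cos θ, sin φ * sin θ, -(cos φ * sin θ)] : EuclideanSpace ℝ (Fin 3)) := by
  change l • quatPosition (eulerQuat φ θ ψ 0) (eulerQuat φ θ ψ 1) (eulerQuat φ θ ψ 2)
    (eulerQuat φ θ ψ 3) = _
  have hsum : φ / 2 - ψ / 2 + (φ / 2 + ψ / 2) = φ := by ring
  have hdouble : 2 * (θ / 2) = θ := by ring
  simp only [eulerQuat_eq_halfAngle, PiLp.toLp_apply, Matrix.cons_val_zero, Matrix.cons_val_one,
    Matrix.cons_val_two, Matrix.cons_val_three, Matrix.head_cons, Matrix.tail_cons]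
  rw [quatPosition_halfAngle, hsum, hdouble]
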